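/- arXiv:2106.03447 — 2 statements merged into one kernel-verified Lean document; each statement's English description precedes it below -/
import Mathlib

section
/- Let γ : [0,L] → R^3 be an injective C² arc-length parametrized curve such that min over s ≠ s' of |γ(s) − γ(s')|/|s − s'| ≥ c₀ > 0. Then there exists c > 0, depending only on c₀, such that for every x ∈ R^3 with orthogonal projection γ(s̄) onto the curve and with |x − γ(s̄)|‖γ''‖_∞ sufficiently small, one has |x − γ(s)| ≥ c |s − s̄| for all s ∈ [0,L]. -/
open Real Set
open scoped RealInnerProductSpace

noncomputable section

abbrev E3 := EuclideanSpace ℝ (Fin 3)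

/-- Chord-arc type lower bound: for an injective C² arc-length parametrized curve with
chord-arc constant `c₀` (i.e. `|γ(s)−γ(s')| ≥ c₀|s−s'|`), there are `c > 0` and a smallness
threshold `δ > 0`, depending only on `c₀`, such that for every point `x` whose orthogonal
projection onto the curve is `γ(s̄)` and with `|x − γ(s̄)|‖γ''‖_∞` small (`≤ δ`), one has
`|x − γ(s)| ≥ c|s − s̄|` for all `s ∈ [0,L]`. -/
theorem stmt15 (c₀ : ℝ) (hc₀ : 0 < c₀) :
    ∃ c : ℝ, 0 < c ∧ ∃ δ : ℝ, 0 < δ ∧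
      ∀ (L M : ℝ) (γ γ' γ'' : ℝ → E3), 0 < L → 0 ≤ M →
        (∀ s ∈ Icc (0:ℝ) L, HasDerivWithinAt γ (γ' s) (Icc 0 L) s) →
        (∀ s ∈ Icc (0:ℝ) L, HasDerivWithinAt γ' (γ'' s) (Icc 0 L) s) →
        (∀ s ∈ Icc (0:ℝ) L, ‖γ' s‖ = 1) →
        (∀ s ∈ Icc (0:ℝ) L, ‖γ'' s‖ ≤ M) →
        (∀ s ∈ Icc (0:ℝ) L, ∀ s' ∈ Icc (0:ℝ) L, c₀ * |s - s'| ≤ ‖γ s - γ s'‖) →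
        ∀ sbar ∈ Icc (0:ℝ) L, ∀ x : E3,
          ⟪x - γ sbar, γ' sbar⟫ = 0 →
          ‖x - γ sbar‖ * M ≤ δ →
          ∀ s ∈ Icc (0:ℝ) L, c * |s - sbar| ≤ ‖x - γ s‖ := by
  refine ⟨c₀ / 2, by positivity, c₀ ^ 2 / 4, by positivity, ?_⟩
  intro L M γ γ' γ'' hL hM hd1 hd2 hunit hM2 hca sbar hsbar x hortho hsmall s hs
  -- γ' is M-Lipschitz on Icc 0 L
  have hconv : Convex ℝ (Icc (0:ℝ) L) := convex_Icc _ _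
  have hlip : ∀ t ∈ Icc (0:ℝ) L, ‖γ' t - γ' sbar‖ ≤ M * |t - sbar| := by
    intro t ht
    have := hconv.norm_image_sub_le_of_norm_hasDerivWithin_le hd2 hM2 hsbar ht
    simpa [Real.norm_eq_abs] using this
  -- Taylor estimate via mean value on the subinterval between sbar and s
  set I : Set ℝ := Icc (min sbar s) (max sbar s) with hI
  have hIsub : I ⊆ Icc (0:ℝ) L := by
    apply Icc_subset_Icc
    · exact le_min hsbar.1 hs.1
    · exact max_le hsbar.2 hs.2
  have hIconv : Convex ℝ I := convex_Icc _ _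
  have hsbarI : sbar ∈ I := ⟨min_le_left _ _, le_max_left _ _⟩
  have hsI : s ∈ I := ⟨min_le_right _ _, le_max_right _ _⟩
  have htaylor : ‖γ s - γ sbar - (s - sbar) • γ' sbar‖ ≤ M * |s - sbar| * |s - sbar| := by
    have hg : ∀ t ∈ I, HasDerivWithinAt (fun t => γ t - t • γ' sbar)
        (γ' t - γ' sbar) I t := by
      intro t ht
      exact ((hd1 t (hIsub ht)).mono hIsub).sub
        (((hasDerivAt_id t).smul_const (γ' sbar)).hasDerivWithinAt.congr_deriv (one_smul ℝ _))
    have hbound : ∀ t ∈ I, ‖γ' t - γ' sbar‖ ≤ M * |s - sbar| := by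
      intro t ht
      refine (hlip t (hIsub ht)).trans ?_
      have hlo := ht.1
      have hhi := ht.2
      have h1 : |t - sbar| ≤ |s - sbar| := by
        rcases le_total sbar s with h | h
        · rw [min_eq_left h] at hlo; rw [max_eq_right h] at hhi
          rw [abs_of_nonneg (by linarith : (0:ℝ) ≤ t - sbar),
            abs_of_nonneg (by linarith : (0:ℝ) ≤ s - sbar)]
          linarith
        · rw [min_eq_right h] at hlo; rw [max_eq_left h] at hhi
          rw [abs_of_nonpos (by linarith : t - sbar ≤ (0:ℝ)),
            abs_of_nonpos (by linarith : s - sbar ≤ (0:ℝ))]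
          linarith
      exact mul_le_mul_of_nonneg_left h1 hM
    have h2 := hIconv.norm_image_sub_le_of_norm_hasDerivWithin_le hg hbound hsbarI hsI
    have h3 : γ s - γ sbar - (s - sbar) • γ' sbar
        = (γ s - s • γ' sbar) - (γ sbar - sbar • γ' sbar) := by module
    rw [h3]
    simpa [Real.norm_eq_abs] using h2
  -- abbreviations
  set a : E3 := x - γ sbar with ha
  set b : E3 := γ s - γ sbar with hb
  have hxs : x - γ s = a - b := by simp [ha, hb]
  have hd : ‖a‖ * M ≤ c₀ ^ 2 / 4 := hsmall
  have htaylor' : ‖b - (s - sbar) • γ' sbar‖ ≤ M * |s - sbar| * |s - sbar| := htaylor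
  clear htaylor
  clear_value a b
  -- inner product estimate
  have hinner : ⟪a, b⟫ ≤ ‖a‖ * (M * |s - sbar| * |s - sbar|) := by
    have h1 : ⟪a, b⟫ = ⟪a, b - (s - sbar) • γ' sbar⟫ := by
      rw [inner_sub_right, real_inner_smul_right, hortho, mul_zero, sub_zero]
    rw [h1]
    calc ⟪a, b - (s - sbar) • γ' sbar⟫ ≤ ‖a‖ * ‖b - (s - sbar) • γ' sbar‖ :=
          real_inner_le_norm _ _
      _ ≤ ‖a‖ * (M * |s - sbar| * |s - sbar|) :=
          mul_le_mul_of_nonneg_left htaylor' (norm_nonneg _)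
  -- chord-arc
  have hchord : c₀ * |s - sbar| ≤ ‖b‖ := by rw [hb]; exact hca s hs sbar hsbar
  -- expand the square
  have hsq : ‖a - b‖ ^ 2 = ‖a‖ ^ 2 - 2 * ⟪a, b⟫ + ‖b‖ ^ 2 := by
    rw [@norm_sub_sq_real]
  have hb2 : (c₀ * |s - sbar|) ^ 2 ≤ ‖b‖ ^ 2 := by
    have : (0:ℝ) ≤ c₀ * |s - sbar| := by positivity
    nlinarith [norm_nonneg b]
  have hkey : (c₀ / 2 * |s - sbar|) ^ 2 ≤ ‖a - b‖ ^ 2 := by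
    have habs : (0:ℝ) ≤ |s - sbar| := abs_nonneg _
    nlinarith [norm_nonneg a, sq_nonneg (‖a‖), sq_nonneg (c₀ * |s - sbar|),
      mul_le_mul_of_nonneg_right hd (sq_nonneg (|s - sbar|))]
  have h0 : (0:ℝ) ≤ c₀ / 2 * |s - sbar| := by positivity
  rw [hxs]
  calc c₀ / 2 * |s - sbar| = Real.sqrt ((c₀ / 2 * |s - sbar|) ^ 2) := (Real.sqrt_sq h0).symm
    _ ≤ Real.sqrt (‖a - b‖ ^ 2) := Real.sqrt_le_sqrt hkey
    _ = ‖a - b‖ := Real.sqrt_sq (norm_nonneg _)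

end
end

section
/- Let C ⊂ R^3 be the image of an injective C² arc-length parametrized curve γ : [0,L] → R^3 that is not contained in any straight line (γ'' ≢ 0). Then the 6×6 matrix K̂ with entries K̂_{αβ} := (1/2)∫_C k(τ(x)) v_α(x) · v_β(x) dH¹(x), where k(p) = 8π(Id − (1/2)p⊗p), τ is the unit tangent, v_α(x) = e_α for α = 1,2,3 and v_α(x) = e_{α−3} ∧ x for α = 4,5,6, is symmetric positive definite; indeed K̂ξ·ξ ≥ 2π ∫_C |v + ω ∧ x|² dH¹(x) > 0 for all ξ = (v, ω) ≠ 0. -/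
/-!
Expanding the quadratic form gives `K̂ξ·ξ = ½ ∫ k(γ') u·u` with `u(s) = v + ω ∧ γ(s)` the rigid
velocity of `ξ = (v, ω)` along the curve. For a unit vector `p`,
`k(p)u·u = 8π|u|² - 4π(p·u)² ≥ 4π|u|²` by Cauchy–Schwarz, which gives the lower bound.
As `|u|²` is continuous, its integral vanishes only if `u = 0` on the whole curve. Differentiating
`ω ∧ γ = -v` once and twice gives `ω ∧ γ' = ω ∧ γ'' = 0`, while `|γ'| = 1` gives `γ'·γ'' = 0`;
so for `ω ≠ 0` the vectors `γ'` and `γ''` are both parallel to `ω` and orthogonal to each other,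
forcing `γ'' = 0`, which the curve does not allow. Hence `ω = 0`, and then `v = 0`.
-/

open Real Matrix Set intervalIntegral

noncomputable section

/-- `k(p) = 8π(Id − (1/2) p⊗p)`. -/
def kmat (p : Fin 3 → ℝ) : Matrix (Fin 3) (Fin 3) ℝ :=
  (8 * π) • (1 - (1/2 : ℝ) • Matrix.vecMulVec p p)

/-- The elementary rigid velocity fields: `v_α(x) = e_α` for `α = 1,2,3` and
`v_α(x) = e_{α−3} ∧ x` for `α = 4,5,6`. -/
def rigidField (α : Fin 6) (x : Fin 3 → ℝ) : Fin 3 → ℝ :=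
  if h : (α : ℕ) < 3 then Pi.single (⟨(α : ℕ), h⟩ : Fin 3) (1 : ℝ)
  else crossProduct (Pi.single (⟨(α : ℕ) - 3, by omega⟩ : Fin 3) (1 : ℝ)) x

/-- Assembling `ξ = (v, ω) ∈ ℝ⁶`. -/
def assemble (v w : Fin 3 → ℝ) : Fin 6 → ℝ := fun α =>
  if h : (α : ℕ) < 3 then v ⟨(α : ℕ), h⟩ else w ⟨(α : ℕ) - 3, by omega⟩

open MeasureTheory

lemma kmat_mulVec_dotProduct (p a b : Fin 3 → ℝ) :
    kmat p *ᵥ a ⬝ᵥ b = 8 * π * (a ⬝ᵥ b) - 4 * π * ((p ⬝ᵥ a) * (p ⬝ᵥ b)) := by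
  simp only [kmat, smul_mulVec, sub_mulVec, one_mulVec, vecMulVec_mulVec, smul_dotProduct,
    sub_dotProduct, smul_eq_mul, op_smul_eq_mul]
  ring

lemma kmat_mulVec_dotProduct_comm (p a b : Fin 3 → ℝ) :
    kmat p *ᵥ a ⬝ᵥ b = kmat p *ᵥ b ⬝ᵥ a := by
  rw [kmat_mulVec_dotProduct, kmat_mulVec_dotProduct, dotProduct_comm a, mul_comm (p ⬝ᵥ a)]

lemma four_pi_mul_dotProduct_self_le_kmat {p : Fin 3 → ℝ} (hp : p ⬝ᵥ p = 1) (u : Fin 3 → ℝ) :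
    4 * π * (u ⬝ᵥ u) ≤ kmat p *ᵥ u ⬝ᵥ u := by
  have hcs : (p ⬝ᵥ u) * (p ⬝ᵥ u) ≤ u ⬝ᵥ u := by
    have := Finset.sum_mul_sq_le_sq_mul_sq Finset.univ p u
    simp only [sq] at this
    rwa [← dotProduct, ← dotProduct, ← dotProduct, hp, one_mul] at this
  rw [kmat_mulVec_dotProduct]
  nlinarith [pi_pos]

@[fun_prop]
lemma continuous_kmat : Continuous kmat := by
  unfold kmat
  fun_prop

@[fun_prop]
lemma continuous_rigidField (α : Fin 6) : Continuous (rigidField α) := by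
  unfold rigidField
  split_ifs
  · exact continuous_const
  · exact LinearMap.continuous_of_finiteDimensional _

lemma sum_assemble_smul_rigidField (v w x : Fin 3 → ℝ) :
    ∑ α, assemble v w α • rigidField α x = v + w ⨯₃ x := by
  ext i
  fin_cases i <;> simp [Fin.sum_univ_six, assemble, rigidField, cross_apply, Pi.single_apply] <;> ring

lemma of_mulVec_dotProduct_eq {m n R : Type*} [Fintype m] [Fintype n] [CommRing R]
    (A : Matrix m m R) (e : n → m → R) (ξ : n → R) :
    (Matrix.of fun i j => A *ᵥ e i ⬝ᵥ e j) *ᵥ ξ ⬝ᵥ ξ = A *ᵥ (∑ i, ξ i • e i) ⬝ᵥ ∑ i, ξ i • e i := by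
  simp only [mulVec_sum, mulVec_smul, sum_dotProduct, dotProduct_sum, smul_dotProduct,
    dotProduct_smul, smul_eq_mul]
  simp only [dotProduct, mulVec, of_apply, Finset.sum_mul, Finset.mul_sum]
  conv_lhs => rw [Finset.sum_comm]
  refine Finset.sum_congr rfl fun _ _ => Finset.sum_congr rfl fun _ _ =>
    Finset.sum_congr rfl fun _ _ => Finset.sum_congr rfl fun _ _ => by ring

lemma mulVec_dotProduct_of_eq_integral {n : Type*} [Fintype n] {K : Matrix n n ℝ}
    {f : n → n → ℝ → ℝ} {a b c : ℝ} (hf : ∀ i j, IntervalIntegrable (f i j) volume a b)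
    (hK : ∀ i j, K i j = c * ∫ s in a..b, f i j s) (ξ : n → ℝ) :
    K *ᵥ ξ ⬝ᵥ ξ = c * ∫ s in a..b, (Matrix.of fun i j => f i j s) *ᵥ ξ ⬝ᵥ ξ := by
  simp only [dotProduct, mulVec, of_apply, hK]
  have hint (i) : IntervalIntegrable (fun s => (∑ j, f i j s * ξ j) * ξ i) volume a b := by
    simpa only [Finset.sum_apply] using
      (IntervalIntegrable.sum Finset.univ fun j _ => (hf i j).mul_const (ξ j)).mul_const (ξ i)
  rw [intervalIntegral.integral_finsetSum fun i _ => hint i, Finset.mul_sum]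
  refine Finset.sum_congr rfl fun i _ => ?_
  rw [intervalIntegral.integral_mul_const,
    intervalIntegral.integral_finsetSum fun j _ => (hf i j).mul_const _, Finset.sum_mul,
    Finset.sum_mul, Finset.mul_sum]
  refine Finset.sum_congr rfl fun j _ => ?_
  rw [intervalIntegral.integral_mul_const]
  ring

lemma HasDerivWithinAt.eq_zero_of_eqOn_Icc {F : Type*} [NormedAddCommGroup F] [NormedSpace ℝ F]
    {f : ℝ → F} {f' c : F} {a b s : ℝ} (hf : HasDerivWithinAt f f' (Icc a b) s) (hab : a < b)
    (hs : s ∈ Icc a b) (hc : EqOn f (fun _ => c) (Icc a b)) : f' = 0 :=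
  (uniqueDiffOn_Icc hab s hs).eq_deriv _ hf ((hasDerivWithinAt_const s _ c).congr hc (hc hs))

lemma smul_eq_smul_of_cross_eq_zero {w z : Fin 3 → ℝ} (h : w ⨯₃ z = 0) :
    (w ⬝ᵥ w) • z = (w ⬝ᵥ z) • w := by
  have := cross_cross_eq_smul_sub_smul' w w z
  rw [h, map_zero, eq_comm, sub_eq_zero] at this
  exact this.symm

lemma eq_zero_of_cross_eq_zero_of_dotProduct_eq_zero {w x y : Fin 3 → ℝ} (hw : w ≠ 0)
    (hx : x ≠ 0) (hwx : w ⨯₃ x = 0) (hwy : w ⨯₃ y = 0) (hxy : x ⬝ᵥ y = 0) : y = 0 := by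
  have hww : w ⬝ᵥ w ≠ 0 := mt dotProduct_self_eq_zero.1 hw
  have hx' := smul_eq_smul_of_cross_eq_zero hwx
  have hy' := smul_eq_smul_of_cross_eq_zero hwy
  have hwx0 : w ⬝ᵥ x ≠ 0 := by
    intro h0
    rw [h0, zero_smul, smul_eq_zero] at hx'
    exact hx (hx'.resolve_left hww)
  have hwy0 : w ⬝ᵥ y = 0 := by
    have := congrArg (· ⬝ᵥ y) hx'
    simp only [smul_dotProduct, smul_eq_mul, hxy, mul_zero] at this
    exact (mul_eq_zero.1 this.symm).resolve_left hwx0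
  rw [hwy0, zero_smul, smul_eq_zero] at hy'
  exact hy'.resolve_left hww

lemma ofLp_dotProduct_self {n : Type*} [Fintype n] (x : EuclideanSpace ℝ n) :
    (x : n → ℝ) ⬝ᵥ x = ‖x‖ ^ 2 := by
  rw [← real_inner_self_eq_norm_sq, EuclideanSpace.inner_eq_star_dotProduct, star_trivial]

section Curve

variable {L : ℝ} {γ γ' : ℝ → E3}

theorem eq_zero_of_add_cross_eq_zero_on_curve (hL : 0 < L) {γ'' : ℝ → E3}
    (hγ' : ∀ s ∈ Icc (0:ℝ) L, HasDerivWithinAt γ (γ' s) (Icc 0 L) s)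
    (hγ'' : ∀ s ∈ Icc (0:ℝ) L, HasDerivWithinAt γ' (γ'' s) (Icc 0 L) s)
    (harc : ∀ s ∈ Icc (0:ℝ) L, ‖γ' s‖ = 1) (hnotline : ∃ s ∈ Icc (0:ℝ) L, γ'' s ≠ 0)
    {v w : Fin 3 → ℝ} (h : ∀ s ∈ Icc 0 L, v + w ⨯₃ γ s = 0) : v = 0 ∧ w = 0 := by
  obtain ⟨s, hs, hγ''s⟩ := hnotline
  have hw : w = 0 := by
    by_contra hw
    let cross : E3 →L[ℝ] (Fin 3 → ℝ) := LinearMap.toContinuousLinearMap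
      ((crossProduct w).comp (WithLp.linearEquiv 2 ℝ (Fin 3 → ℝ)).toLinearMap)
    have hcross' : ∀ t ∈ Icc 0 L, w ⨯₃ γ' t = 0 := fun t ht =>
      (cross.hasFDerivAt.comp_hasDerivWithinAt t (hγ' t ht)).eq_zero_of_eqOn_Icc hL ht
        (c := -v) fun r hr => eq_neg_of_add_eq_zero_right (h r hr)
    have hcross'' : w ⨯₃ γ'' s = 0 :=
      (cross.hasFDerivAt.comp_hasDerivWithinAt s (hγ'' s hs)).eq_zero_of_eqOn_Icc hL hs hcross'
    have horth : γ' s ⬝ᵥ γ'' s = 0 := by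
      have := (hγ'' s hs).norm_sq.eq_zero_of_eqOn_Icc hL hs (c := 1)
        fun t ht => by simp [harc t ht]
      simpa [EuclideanSpace.inner_eq_star_dotProduct, dotProduct_comm] using this
    have hγ's : (γ' s : Fin 3 → ℝ) ≠ 0 := by
      rw [Ne, WithLp.ofLp_eq_zero, ← norm_eq_zero, harc s hs]
      exact one_ne_zero
    have := eq_zero_of_cross_eq_zero_of_dotProduct_eq_zero hw hγ's (hcross' s hs) hcross'' horth
    exact hγ''s ((WithLp.ofLp_eq_zero 2).1 this)
  refine ⟨?_, hw⟩
  simpa [hw] using h 0 ⟨le_rfl, hL.le⟩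

lemma mulVec_assemble_dotProduct_eq_integral (hL : 0 ≤ L) (hγ : ContinuousOn γ (Icc 0 L))
    (hγ' : ContinuousOn γ' (Icc 0 L)) {Khat : Matrix (Fin 6) (Fin 6) ℝ}
    (hKhat : ∀ α β : Fin 6, Khat α β = (1/2) * ∫ s in (0:ℝ)..L,
      ((kmat (γ' s)).mulVec (rigidField α (γ s))) ⬝ᵥ (rigidField β (γ s))) (v w : Fin 3 → ℝ) :
    Khat *ᵥ assemble v w ⬝ᵥ assemble v w =
      1 / 2 * ∫ s in 0..L, kmat (γ' s) *ᵥ (v + w ⨯₃ γ s) ⬝ᵥ (v + w ⨯₃ γ s) := by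
  rw [mulVec_dotProduct_of_eq_integral (fun α β =>
    ContinuousOn.intervalIntegrable_of_Icc hL (by fun_prop)) hKhat]
  simp only [of_mulVec_dotProduct_eq, sum_assemble_smul_rigidField]

lemma two_pi_mul_integral_le_integral_kmat (hL : 0 ≤ L) (hγ : ContinuousOn γ (Icc 0 L))
    (hγ' : ContinuousOn γ' (Icc 0 L)) (harc : ∀ s ∈ Icc 0 L, ‖γ' s‖ = 1) (u : E3 → Fin 3 → ℝ)
    (hu : Continuous u) :
    2 * π * ∫ s in 0..L, u (γ s) ⬝ᵥ u (γ s) ≤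
      1 / 2 * ∫ s in 0..L, kmat (γ' s) *ᵥ u (γ s) ⬝ᵥ u (γ s) := by
  have hunit (s) (hs : s ∈ Icc 0 L) : (γ' s : Fin 3 → ℝ) ⬝ᵥ γ' s = 1 := by
    rw [ofLp_dotProduct_self, harc s hs, one_pow]
  calc 2 * π * ∫ s in 0..L, u (γ s) ⬝ᵥ u (γ s)
      = 1 / 2 * ∫ s in 0..L, 4 * π * (u (γ s) ⬝ᵥ u (γ s)) := by
        rw [intervalIntegral.integral_const_mul]; ring
    _ ≤ 1 / 2 * ∫ s in 0..L, kmat (γ' s) *ᵥ u (γ s) ⬝ᵥ u (γ s) := by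
        refine mul_le_mul_of_nonneg_left (intervalIntegral.integral_mono_on hL ?_ ?_
          fun s hs => four_pi_mul_dotProduct_self_le_kmat (hunit s hs) _) (by norm_num)
        all_goals exact ContinuousOn.intervalIntegrable_of_Icc hL (by fun_prop)

end Curve

theorem stmt19_general (L : ℝ) (hL : 0 < L) (γ γ' γ'' : ℝ → E3)
    (hγ' : ∀ s ∈ Icc (0:ℝ) L, HasDerivWithinAt γ (γ' s) (Icc 0 L) s)
    (hγ'' : ∀ s ∈ Icc (0:ℝ) L, HasDerivWithinAt γ' (γ'' s) (Icc 0 L) s)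
    (harc : ∀ s ∈ Icc (0:ℝ) L, ‖γ' s‖ = 1)
    (hnotline : ∃ s ∈ Icc (0:ℝ) L, γ'' s ≠ 0)
    (Khat : Matrix (Fin 6) (Fin 6) ℝ)
    (hKhat : ∀ α β : Fin 6, Khat α β =
      (1/2) * ∫ s in (0:ℝ)..L,
        ((kmat (γ' s)).mulVec (rigidField α (γ s))) ⬝ᵥ (rigidField β (γ s))) :
    Khat.IsSymm ∧
      ∀ v w : Fin 3 → ℝ, ¬(v = 0 ∧ w = 0) →
        (2 * π) * (∫ s in (0:ℝ)..L, ∑ i, (v i + crossProduct w (γ s) i) ^ 2) ≤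
            Khat.mulVec (assemble v w) ⬝ᵥ assemble v w ∧
        0 < (2 * π) * (∫ s in (0:ℝ)..L, ∑ i, (v i + crossProduct w (γ s) i) ^ 2) := by
  have hγc : ContinuousOn γ (Icc 0 L) := fun s hs => (hγ' s hs).continuousWithinAt
  have hγ'c : ContinuousOn γ' (Icc 0 L) := fun s hs => (hγ'' s hs).continuousWithinAt
  refine ⟨IsSymm.ext fun α β => by simp only [hKhat, kmat_mulVec_dotProduct_comm _ (rigidField α _)],
    fun v w hvw => ?_⟩
  let u (x : E3) : Fin 3 → ℝ := v + w ⨯₃ x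
  have hu : Continuous u := continuous_const.add
    ((LinearMap.continuous_of_finiteDimensional (crossProduct w)).comp (PiLp.continuous_ofLp 2 _))
  have hsq (s) : ∑ i, (v i + crossProduct w (γ s) i) ^ 2 = u (γ s) ⬝ᵥ u (γ s) := by
    simp only [dotProduct, sq, u, Pi.add_apply]
  have hnonneg (s) : 0 ≤ u (γ s) ⬝ᵥ u (γ s) := Finset.sum_nonneg fun i _ => mul_self_nonneg _
  have hpos : 0 < ∫ s in 0..L, u (γ s) ⬝ᵥ u (γ s) := by
    refine intervalIntegral.integral_pos hL (by fun_prop) (fun s _ => hnonneg s) ?_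
    by_contra! hzero
    exact hvw (eq_zero_of_add_cross_eq_zero_on_curve hL hγ' hγ'' harc hnotline fun s hs =>
      dotProduct_self_eq_zero.1 ((hzero s hs).antisymm (hnonneg s)))
  simp only [hsq, mulVec_assemble_dotProduct_eq_integral hL.le hγc hγ'c hKhat]
  exact ⟨two_pi_mul_integral_le_integral_kmat hL.le hγc hγ'c harc u hu, by positivity⟩

/-- For an injective C² arc-length parametrized curve `γ` on `[0,L]` that is not a straight
line, the limit resistance matrix `K̂_{αβ} = (1/2)∫_C k(τ) v_α · v_β dH¹` (written here as an
arc-length integral) is symmetric positive definite; indeed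
`K̂ξ·ξ ≥ 2π ∫_C |v + ω ∧ x|² dH¹ > 0` for all `ξ = (v,ω) ≠ 0`. -/
theorem stmt19 (L : ℝ) (hL : 0 < L) (γ γ' γ'' : ℝ → E3)
    (hγ' : ∀ s ∈ Icc (0:ℝ) L, HasDerivWithinAt γ (γ' s) (Icc 0 L) s)
    (hγ'' : ∀ s ∈ Icc (0:ℝ) L, HasDerivWithinAt γ' (γ'' s) (Icc 0 L) s)
    (harc : ∀ s ∈ Icc (0:ℝ) L, ‖γ' s‖ = 1)
    (hinj : InjOn γ (Icc 0 L))
    (hnotline : ∃ s ∈ Icc (0:ℝ) L, γ'' s ≠ 0)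
    (Khat : Matrix (Fin 6) (Fin 6) ℝ)
    (hKhat : ∀ α β : Fin 6, Khat α β =
      (1/2) * ∫ s in (0:ℝ)..L,
        ((kmat (γ' s)).mulVec (rigidField α (γ s))) ⬝ᵥ (rigidField β (γ s))) :
    Khat.IsSymm ∧
      ∀ v w : Fin 3 → ℝ, ¬(v = 0 ∧ w = 0) →
        (2 * π) * (∫ s in (0:ℝ)..L, ∑ i, (v i + crossProduct w (γ s) i) ^ 2) ≤
            Khat.mulVec (assemble v w) ⬝ᵥ assemble v w ∧
        0 < (2 * π) * (∫ s in (0:ℝ)..L, ∑ i, (v i + crossProduct w (γ s) i) ^ 2) :=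
  stmt19_general L hL γ γ' γ'' hγ' hγ'' harc hnotline Khat hKhat
end
end
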